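/- The entropy of the orthonormal Chebyshev polynomials of the first kind satisfies E(T̂_n) = log 2 − 1 for all n ≥ 1 (and E(T̂_0) = 0), where T̂_n = √2 T_n for n ≥ 1, with T_n(cos θ) = cos(nθ), and E(T̂_n) = −∫_{−1}^1 (T̂_n(x))² log((T̂_n(x))²) (1/(π√(1−x²))) dx. -/

import Mathlib

open Polynomial

/-- Orthonormal Chebyshev polynomial of the first kind: `T̂_0 = 1`,
`T̂_n = √2 · T_n` for `n ≥ 1`. -/
noncomputable def chebyshevTHat (n : ℕ) (x : ℝ) : ℝ :=
  if n = 0 then 1 else Real.sqrt 2 * (Polynomial.Chebyshev.T ℝ n).eval x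

/-!
Substituting `x = cos θ` turns the Chebyshev weight into `dθ / π` and `T̂_n(cos θ)²` into
`2 cos² (n θ)`. The integrand is `π`-periodic in `θ`, so the factor `n` can be dropped, and a
shift by `π / 2` leaves `∫₀^π 2 sin² θ log (2 sin² θ) dθ = π (1 - log 2)`, which follows from
`∫₀^π log (sin θ) dθ = -π log 2` and `∫₀^π cos 2θ log (sin θ) dθ = -π / 2`.
-/

open Real intervalIntegral MeasureTheory

theorem integral_chebyshev_weight_eq_integral_cos (f : ℝ → ℝ) :
    ∫ x in (-1 : ℝ)..1, f x * (1 / (π * √(1 - x ^ 2))) = π⁻¹ * ∫ θ in 0..π, f (cos θ) := by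
  -- `√(1 - x ^ 2)⁻¹` parses as `√((1 - x ^ 2)⁻¹)`, the form used by `Chebyshev.measureT`.
  have hweight (x : ℝ) : f x * (1 / (π * √(1 - x ^ 2))) = π⁻¹ * f x * √(1 - x ^ 2)⁻¹ := by
    rw [one_div, mul_inv, sqrt_inv]; ring
  simp_rw [hweight, ← Chebyshev.integral_measureT, Chebyshev.integral_measureT_eq_integral_cos,
    intervalIntegral.integral_const_mul]

theorem Function.Periodic.intervalIntegral_comp_nat_mul {E : Type*} [NormedAddCommGroup E]
    [NormedSpace ℝ E] {f : ℝ → E} {T : ℝ} (hf : Function.Periodic f T)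
    (hint : ∀ a b, IntervalIntegrable f volume a b) {n : ℕ} (hn : n ≠ 0) :
    ∫ x in 0..T, f (n * x) = ∫ x in 0..T, f x := by
  have hn' : (n : ℝ) ≠ 0 := Nat.cast_ne_zero.mpr hn
  have := hf.intervalIntegral_add_zsmul_eq n 0 hint
  simp only [zero_add, natCast_zsmul] at this
  rw [integral_comp_mul_left _ hn', mul_zero, ← nsmul_eq_mul, this, ← Nat.cast_smul_eq_nsmul ℝ,
    smul_smul, inv_mul_cancel₀ hn', one_smul]

theorem integral_cos_two_mul_mul_log_sin :
    ∫ θ in 0..π, cos (2 * θ) * log (sin θ) = -(π / 2) := by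
  set F : ℝ → ℝ := fun θ ↦ cos θ * (sin θ * log (sin θ)) - θ / 2 - sin θ * cos θ / 2
  have hF : ∀ θ ∈ Set.Ioo 0 π, HasDerivAt F (cos (2 * θ) * log (sin θ)) θ := by
    intro θ hθ
    have hsin : sin θ ≠ 0 := (sin_pos_of_pos_of_lt_pi hθ.1 hθ.2).ne'
    refine ((((hasDerivAt_cos θ).mul ((hasDerivAt_sin θ).mul ((hasDerivAt_sin θ).log hsin))).sub
      ((hasDerivAt_id θ).div_const 2)).sub
      (((hasDerivAt_sin θ).mul (hasDerivAt_cos θ)).div_const 2)).congr_deriv ?_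
    simp only [Pi.mul_apply]
    field_simp
    rw [cos_two_mul]
    linear_combination (1 - 2 * log (sin θ)) * sin_sq_add_cos_sq θ
  have hcont : Continuous F := by
    have := continuous_mul_log.comp continuous_sin
    fun_prop
  have hint : IntervalIntegrable (fun θ ↦ cos (2 * θ) * log (sin θ)) volume 0 π :=
    intervalIntegrable_log_sin.continuousOn_mul (by fun_prop)
  rw [integral_eq_sub_of_hasDerivAt_of_le pi_pos.le hcont.continuousOn hF hint]
  simp [F]

theorem two_mul_sin_sq_mul_log (θ : ℝ) :
    2 * sin θ ^ 2 * log (2 * sin θ ^ 2) =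
      log 2 * (2 * sin θ ^ 2) + 2 * log (sin θ) - 2 * (cos (2 * θ) * log (sin θ)) := by
  rw [cos_two_mul, cos_sq']
  rcases eq_or_ne (sin θ) 0 with hs | hs
  · norm_num [hs]
  · rw [log_mul two_ne_zero (pow_ne_zero 2 hs), log_pow]
    push_cast
    ring

theorem integral_two_mul_sin_sq_mul_log :
    ∫ θ in 0..π, 2 * sin θ ^ 2 * log (2 * sin θ ^ 2) = π - π * log 2 := by
  have hsq : IntervalIntegrable (fun θ ↦ log 2 * (2 * sin θ ^ 2)) volume 0 π :=
    Continuous.intervalIntegrable (by fun_prop) 0 π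
  have hlog : IntervalIntegrable (fun θ ↦ 2 * log (sin θ)) volume 0 π :=
    intervalIntegrable_log_sin.const_mul 2
  have hcos : IntervalIntegrable (fun θ ↦ 2 * (cos (2 * θ) * log (sin θ))) volume 0 π :=
    (intervalIntegrable_log_sin.continuousOn_mul (by fun_prop)).const_mul 2
  simp_rw [two_mul_sin_sq_mul_log]
  rw [integral_sub (hsq.add hlog) hcos, integral_add hsq hlog]
  simp only [intervalIntegral.integral_const_mul, integral_sin_sq, integral_log_sin_zero_pi,
    integral_cos_two_mul_mul_log_sin, sin_zero, sin_pi]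
  ring

theorem periodic_two_mul_cos_sq_mul_log :
    Function.Periodic (fun θ ↦ 2 * cos θ ^ 2 * log (2 * cos θ ^ 2)) π := by
  intro θ
  simp only [cos_add_pi, neg_sq]

theorem integral_two_mul_cos_sq_mul_log :
    ∫ θ in 0..π, 2 * cos θ ^ 2 * log (2 * cos θ ^ 2) = π - π * log 2 := by
  calc ∫ θ in 0..π, 2 * cos θ ^ 2 * log (2 * cos θ ^ 2)
      = ∫ θ in π / 2..π / 2 + π, 2 * cos θ ^ 2 * log (2 * cos θ ^ 2) := by
        simpa using periodic_two_mul_cos_sq_mul_log.intervalIntegral_add_eq 0 (π / 2)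
    _ = ∫ θ in 0..π, 2 * cos (θ + π / 2) ^ 2 * log (2 * cos (θ + π / 2) ^ 2) := by
        rw [integral_comp_add_right (fun θ ↦ 2 * cos θ ^ 2 * log (2 * cos θ ^ 2)), zero_add,
          add_comm]
    _ = π - π * log 2 := by
        simp only [cos_add_pi_div_two, neg_sq, integral_two_mul_sin_sq_mul_log]

theorem integral_two_mul_cos_nat_mul_sq_mul_log {n : ℕ} (hn : n ≠ 0) :
    ∫ θ in 0..π, 2 * cos (n * θ) ^ 2 * log (2 * cos (n * θ) ^ 2) = π - π * log 2 := by
  have hcont : Continuous fun θ ↦ 2 * cos θ ^ 2 * log (2 * cos θ ^ 2) :=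
    continuous_mul_log.comp (by fun_prop)
  rw [periodic_two_mul_cos_sq_mul_log.intervalIntegral_comp_nat_mul
    (fun a b ↦ hcont.intervalIntegrable a b) hn, integral_two_mul_cos_sq_mul_log]

theorem chebyshevTHat_cos_sq {n : ℕ} (hn : n ≠ 0) (θ : ℝ) :
    chebyshevTHat n (cos θ) ^ 2 = 2 * cos (n * θ) ^ 2 := by
  rw [chebyshevTHat, if_neg hn, mul_pow, sq_sqrt zero_le_two, Chebyshev.T_real_cos,
    Int.cast_natCast]

theorem entropy_orthonormal_chebyshevT (n : ℕ) :
    -∫ x in (-1 : ℝ)..1,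
        (chebyshevTHat n x) ^ 2 * Real.log ((chebyshevTHat n x) ^ 2) *
          (1 / (Real.pi * Real.sqrt (1 - x ^ 2))) =
      if n = 0 then 0 else Real.log 2 - 1 := by
  rcases eq_or_ne n 0 with rfl | hn
  · simp [chebyshevTHat]
  rw [if_neg hn, integral_chebyshev_weight_eq_integral_cos]
  simp only [chebyshevTHat_cos_sq hn, integral_two_mul_cos_nat_mul_sq_mul_log hn]
  field_simp
  ring
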